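/- arXiv:1211.0319 — 2 statements merged into one kernel-verified Lean document; each statement's English description precedes it below -/
import Mathlib

section
/- For v > (1/2)Aρ_jam (with A, B, ρ_jam > 0), the pair ρ = 2ρ_jam(2v - Aρ_jam)/(3v - 2Aρ_jam + √(9v² - 4Aρ_jam v)) and q̂ = (3v - 2Aρ_jam + √(9v² - 4Aρ_jam v))/(2Bρ_jam) satisfies the system v = (A + B q̂)(ρ_jam - ρ) and Aρ + B q̂(2ρ - ρ_jam) = v, and moreover ρ ≥ 0 and q̂ > 0. -/
/-!
Put `x = B q̂`. Given the first equation `(A + x)(ρ_jam - ρ) = v`, the second one is equivalent to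
`ρ x = 2v - Aρ_jam`, and eliminating `ρ` from the first turns it into the quadratic
`ρ_jam x² + (2Aρ_jam - 3v) x + A(Aρ_jam - 2v) = 0` of discriminant `9v² - 4Aρ_jam v`.
The stated `q̂` is its larger root divided by `B`, and the stated `ρ` is `(2v - Aρ_jam) / x`.
Since `√(9v² - 4Aρ_jam v) > v`, the common numerator `3v - 2Aρ_jam + √(…)` exceeds `2(2v - Aρ_jam) > 0`.
-/

section Field

variable {K : Type*} [Field K]

theorem ptm_quadratic_root [NeZero (2 : K)] {A ρjam v s : K} (hρjam : ρjam ≠ 0)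
    (hs : s ^ 2 = 9 * v ^ 2 - 4 * A * ρjam * v) :
    let x := (3 * v - 2 * A * ρjam + s) / (2 * ρjam)
    ρjam * (x * x) + (2 * A * ρjam - 3 * v) * x + A * (A * ρjam - 2 * v) = 0 := by
  refine (quadratic_eq_zero_iff hρjam (s := s) ?_ _).2 (Or.inl ?_)
  · rw [discrim]
    linear_combination -hs
  · ring

theorem ptm_system_of_quadratic {A ρjam v x ρ : K} (hx : x ≠ 0)
    (hquad : ρjam * (x * x) + (2 * A * ρjam - 3 * v) * x + A * (A * ρjam - 2 * v) = 0)
    (hρx : ρ * x = 2 * v - A * ρjam) :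
    (A + x) * (ρjam - ρ) = v ∧ A * ρ + x * (2 * ρ - ρjam) = v := by
  have hfirst : (A + x) * (ρjam - ρ) = v := by
    refine mul_right_cancel₀ hx ?_
    linear_combination hquad - (A + x) * hρx
  exact ⟨hfirst, by linear_combination hρx - hfirst⟩

end Field

theorem lt_sqrt_nine_sq_sub {A ρjam v : ℝ} (hv : 0 < v) (h : A * ρjam < 2 * v) :
    v < Real.sqrt (9 * v ^ 2 - 4 * A * ρjam * v) := by
  rw [Real.lt_sqrt hv.le]
  nlinarith

/-- For v > Aρ_jam/2, the positive root branch solves the PTM without source,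
with ρ ≥ 0 and qhat > 0. -/
theorem ptm_no_source_high_speed_branch
    (A B ρjam v : ℝ) (hA : 0 < A) (hB : 0 < B) (hρjam : 0 < ρjam)
    (hv : v > A * ρjam / 2) :
    let s := Real.sqrt (9 * v ^ 2 - 4 * A * ρjam * v)
    let ρ := 2 * ρjam * (2 * v - A * ρjam) / (3 * v - 2 * A * ρjam + s)
    let qhat := (3 * v - 2 * A * ρjam + s) / (2 * B * ρjam)
    A * (ρjam - ρ) + B * qhat * (ρjam - ρ) = v ∧
      A * ρ + B * qhat * (2 * ρ - ρjam) = v ∧ 0 ≤ ρ ∧ 0 < qhat := by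
  intro s ρ qhat
  have hv0 : 0 < v := by nlinarith [mul_pos hA hρjam]
  have hs : s ^ 2 = 9 * v ^ 2 - 4 * A * ρjam * v := Real.sq_sqrt (by nlinarith)
  have hD : 0 < 3 * v - 2 * A * ρjam + s := by
    linarith [lt_sqrt_nine_sq_sub hv0 (by linarith : A * ρjam < 2 * v)]
  have hx : B * qhat = (3 * v - 2 * A * ρjam + s) / (2 * ρjam) := by
    simp only [qhat]
    field_simp
  have hρx : ρ * (B * qhat) = 2 * v - A * ρjam := by
    rw [hx, div_mul_div_comm, div_eq_iff (by positivity)]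
    ring
  obtain ⟨hfirst, hsecond⟩ := ptm_system_of_quadratic (by rw [hx]; positivity)
    (hx ▸ ptm_quadratic_root hρjam.ne' hs) hρx
  refine ⟨by linear_combination hfirst, hsecond, ?_, by positivity⟩
  exact div_nonneg (mul_nonneg (by positivity) (by linarith)) hD.le
end

section
/- For (4/9)Aρ_jam < v ≤ (1/2)Aρ_jam (with A, B, ρ_jam > 0), the pair ρ = 2ρ_jam(2v - Aρ_jam)/(3v - 2Aρ_jam - √(9v² - 4Aρ_jam v)) and q̂ = (3v - 2Aρ_jam - √(9v² - 4Aρ_jam v))/(2Bρ_jam) satisfies v = (A + B q̂)(ρ_jam - ρ) and Aρ + B q̂(2ρ - ρ_jam) = v, with ρ ≥ 0 and q̂ < 0. -/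
/-! With `P = A ρjam` and `E = D + 2P`, where `D = 3v - 2P - s` is the common denominator,
both equations become, after clearing denominators, the quadratic `E² - 6vE + 4Pv = 0`,
whose roots are `3v ± √(9v² - 4Pv)`; here `E = 3v - s` is the smaller one. The lower bound
`4P/9 < v` keeps the discriminant nonnegative, and `v ≤ P/2` makes `D` negative, which fixes
the signs of `ρ` and `qhat`. -/

theorem ptm_no_source_eqs_of_root {A B ρjam v D ρ qhat : ℝ} (hB : B ≠ 0) (hρjam : ρjam ≠ 0)
    (hD : D ≠ 0)
    (hroot : (D + 2 * A * ρjam) ^ 2 - 6 * v * (D + 2 * A * ρjam) + 4 * A * ρjam * v = 0)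
    (hρ : ρ = 2 * ρjam * (2 * v - A * ρjam) / D) (hqhat : qhat = D / (2 * B * ρjam)) :
    A * (ρjam - ρ) + B * qhat * (ρjam - ρ) = v ∧
      A * ρ + B * qhat * (2 * ρ - ρjam) = v := by
  subst hρ hqhat
  constructor
  · field_simp
    linear_combination hroot
  · field_simp
    linear_combination -hroot

theorem ptm_no_source_low_speed_branch_general
    (A B ρjam v : ℝ) (hB : 0 < B) (hρjam : 0 < ρjam)
    (hv1 : (4 / 9) * A * ρjam < v) (hv2 : v ≤ A * ρjam / 2) :
    let s := Real.sqrt (9 * v ^ 2 - 4 * A * ρjam * v)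
    let ρ := 2 * ρjam * (2 * v - A * ρjam) / (3 * v - 2 * A * ρjam - s)
    let qhat := (3 * v - 2 * A * ρjam - s) / (2 * B * ρjam)
    A * (ρjam - ρ) + B * qhat * (ρjam - ρ) = v ∧
      A * ρ + B * qhat * (2 * ρ - ρjam) = v ∧ 0 ≤ ρ ∧ qhat < 0 := by
  intro s ρ qhat
  have hP : 0 < A * ρjam := by linarith
  have hv : 0 < v := by linarith
  have hs : s ^ 2 = 9 * v ^ 2 - 4 * A * ρjam * v := Real.sq_sqrt (by nlinarith)
  have hs0 : 0 ≤ s := Real.sqrt_nonneg _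
  have hD : 3 * v - 2 * A * ρjam - s < 0 := by linarith
  obtain ⟨hflux, hflux'⟩ := ptm_no_source_eqs_of_root (ρ := ρ) (qhat := qhat) hB.ne' hρjam.ne'
    hD.ne (by linear_combination hs) rfl rfl
  have hnum : 2 * ρjam * (2 * v - A * ρjam) ≤ 0 :=
    mul_nonpos_of_nonneg_of_nonpos (by positivity) (by linarith)
  exact ⟨hflux, hflux', div_nonneg_of_nonpos hnum hD.le, div_neg_of_neg_of_pos hD (by positivity)⟩

/-- For (4/9)Aρ_jam < v ≤ Aρ_jam/2, the negative root branch solves the PTM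
without source, with ρ ≥ 0 and qhat < 0. -/
theorem ptm_no_source_low_speed_branch
    (A B ρjam v : ℝ) (hA : 0 < A) (hB : 0 < B) (hρjam : 0 < ρjam)
    (hv1 : (4 / 9) * A * ρjam < v) (hv2 : v ≤ A * ρjam / 2) :
    let s := Real.sqrt (9 * v ^ 2 - 4 * A * ρjam * v)
    let ρ := 2 * ρjam * (2 * v - A * ρjam) / (3 * v - 2 * A * ρjam - s)
    let qhat := (3 * v - 2 * A * ρjam - s) / (2 * B * ρjam)
    A * (ρjam - ρ) + B * qhat * (ρjam - ρ) = v ∧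
      A * ρ + B * qhat * (2 * ρ - ρjam) = v ∧ 0 ≤ ρ ∧ qhat < 0 :=
  ptm_no_source_low_speed_branch_general A B ρjam v hB hρjam hv1 hv2
end
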